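/- arXiv:1911.04086 — 6 statements merged into one kernel-verified Lean document; each statement's English description precedes it below -/
import Mathlib

section
/- Let B(t) be a family of S×S real matrices, continuous in t, and suppose there is a locally integrable function α(t) such that for every t and every column j, Σ_i b_{ij}(t) ≤ -α(t) and all off-diagonal entries of B(t) are nonnegative. Then any solution w(t) of w'(t) = B(t) w(t) satisfies ‖w(t)‖₁ ≤ exp(-∫_s^t α(u) du) ‖w(s)‖₁ for all t ≥ s ≥ 0. -/
/-!
Each `|w i|` has a right derivative `σ i * w' i` with `|σ i| ≤ 1` and `σ i * w i = |w i|`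
(take `σ i = sign (w' i)` where `w i` vanishes). Summing over `i`, the diagonal terms of
`σ ⬝ᵥ B w` contribute `b_jj |w_j|` and, as the off-diagonal entries are nonnegative, the other
terms at most `b_ij |w_j|`; so the column sums bound the right derivative of `‖w‖₁` by
`-β ‖w‖₁`, where `-β` is the largest column sum. Hence `exp (∫ β) ‖w‖₁` is nonincreasing, and
`α ≤ β` gives the bound with `α`. The continuous `β` replaces the merely locally integrable `α`,
whose integral need not be differentiable.
-/

open Set Asymptotics Matrix

theorem HasDerivAt.hasDerivWithinAt_abs_Ici_of_eq_zero {f : ℝ → ℝ} {f' x : ℝ}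
    (hf : HasDerivAt f f' x) (hx : f x = 0) :
    HasDerivWithinAt (fun y => |f y|) |f'| (Ici x) x := by
  rw [hasDerivWithinAt_iff_isLittleO]
  refine IsBigO.trans_isLittleO (IsBigO.of_bound' ?_)
    ((hasDerivAt_iff_isLittleO.1 hf).mono nhdsWithin_le_nhds)
  filter_upwards [self_mem_nhdsWithin] with y (hy : x ≤ y)
  simpa [hx, abs_mul, abs_of_nonneg (sub_nonneg.2 hy)] using
    abs_abs_sub_abs_le_abs_sub (f y) ((y - x) * f')

theorem abs_sign_le_one {R : Type*} [Ring R] [LinearOrder R] [IsStrictOrderedRing R] (x : R) :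
    |(SignType.sign x : R)| ≤ 1 := by
  rcases lt_trichotomy x 0 with h | h | h <;> simp [h]

theorem HasDerivAt.exists_hasDerivWithinAt_abs_Ici {f : ℝ → ℝ} {f' x : ℝ}
    (hf : HasDerivAt f f' x) :
    ∃ σ : ℝ, |σ| ≤ 1 ∧ σ * f x = |f x| ∧
      HasDerivWithinAt (fun y => |f y|) (σ * f') (Ici x) x := by
  by_cases hx : f x = 0
  · refine ⟨SignType.sign f', abs_sign_le_one f', by simp [hx], ?_⟩
    simpa using hf.hasDerivWithinAt_abs_Ici_of_eq_zero hx
  · exact ⟨SignType.sign (f x), abs_sign_le_one (f x), sign_mul_self (f x),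
      ((hasDerivAt_abs hx).comp x hf).hasDerivWithinAt⟩

theorem dotProduct_mulVec_le_of_colSum_le {ι : Type*} [Fintype ι] {A : Matrix ι ι ℝ}
    {β : ℝ} (hcol : ∀ j, ∑ i, A i j ≤ -β) (hoff : ∀ i j, i ≠ j → 0 ≤ A i j) {σ v : ι → ℝ}
    (hσ : ∀ i, |σ i| ≤ 1) (hσv : ∀ i, σ i * v i = |v i|) :
    σ ⬝ᵥ (A *ᵥ v) ≤ -β * ∑ i, |v i| := by
  have hentry : ∀ i j, σ i * A i j * v j ≤ A i j * |v j| := by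
    intro i j
    by_cases hij : i = j
    · subst hij; exact le_of_eq (by rw [mul_right_comm, hσv, mul_comm])
    · calc σ i * A i j * v j ≤ |σ i| * A i j * |v j| := by
            simpa [abs_mul, abs_of_nonneg (hoff i j hij)] using le_abs_self (σ i * A i j * v j)
        _ ≤ 1 * A i j * |v j| := by gcongr; exacts [hoff i j hij, hσ i]
        _ = A i j * |v j| := by rw [one_mul]
  calc σ ⬝ᵥ (A *ᵥ v) = ∑ j, ∑ i, σ i * A i j * v j := by
        rw [dotProduct_mulVec]; simp only [dotProduct, vecMul, Finset.sum_mul]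
    _ ≤ ∑ j, (∑ i, A i j) * |v j| := by
        gcongr with j; rw [Finset.sum_mul]; exact Finset.sum_le_sum fun i _ => hentry i j
    _ ≤ ∑ j, -β * |v j| := by gcongr with j; exact hcol j
    _ = -β * ∑ i, |v i| := Finset.mul_sum .. |>.symm

theorem le_exp_neg_integral_mul_of_hasDerivWithinAt_Ici_le {V β : ℝ → ℝ} {s t : ℝ}
    (hst : s ≤ t) (hβ : Continuous β) (hV : ContinuousOn V (Icc s t))
    (hV' : ∀ x ∈ Ico s t, ∃ d, HasDerivWithinAt V d (Ici x) x ∧ d ≤ -β x * V x) :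
    V t ≤ Real.exp (-∫ u in s..t, β u) * V s := by
  choose! d hd hdle using hV'
  set A : ℝ → ℝ := fun τ => ∫ u in s..τ, β u
  have hA : ∀ τ, HasDerivAt A (β τ) τ := fun τ =>
    (hβ.integral_hasStrictDerivAt s τ).hasDerivAt
  have hAc : Continuous A := continuous_iff_continuousAt.2 fun τ => (hA τ).continuousAt
  have hdecay : Real.exp (A t) * V t ≤ V s := by
    refine image_le_of_deriv_right_le_deriv_boundary (f := fun τ => Real.exp (A τ) * V τ)
      (B := fun _ => V s) (B' := 0) ((Real.continuous_exp.comp hAc).continuousOn.mul hV)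
      (fun x hx => (hA x).exp.hasDerivWithinAt.mul (hd x hx)) (by simp [A])
      continuousOn_const (fun x _ => hasDerivWithinAt_const _ _ _) (fun x hx => ?_)
      (right_mem_Icc.2 hst)
    have := mul_le_mul_of_nonneg_left (hdle x hx) (Real.exp_pos (A x)).le
    simp only [Pi.zero_apply]
    linarith
  calc V t = Real.exp (-A t) * (Real.exp (A t) * V t) := by
        rw [← mul_assoc, ← Real.exp_add, neg_add_cancel, Real.exp_zero, one_mul]
    _ ≤ Real.exp (-A t) * V s := by gcongr

theorem exists_hasDerivWithinAt_sum_abs_le {ι : Type*} [Fintype ι] {A : Matrix ι ι ℝ}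
    {β : ℝ} (hcol : ∀ j, ∑ i, A i j ≤ -β) (hoff : ∀ i j, i ≠ j → 0 ≤ A i j)
    {w : ℝ → ι → ℝ} {t : ℝ}
    (hw : ∀ i, HasDerivAt (fun τ => w τ i) ((A *ᵥ w t) i) t) :
    ∃ d, HasDerivWithinAt (fun τ => ∑ i, |w τ i|) d (Ici t) t ∧ d ≤ -β * ∑ i, |w t i| := by
  choose σ hσ hσw hderiv using fun i => (hw i).exists_hasDerivWithinAt_abs_Ici
  exact ⟨σ ⬝ᵥ (A *ᵥ w t), HasDerivWithinAt.fun_sum fun i _ => hderiv i,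
    dotProduct_mulVec_le_of_colSum_le hcol hoff hσ hσw⟩

theorem sum_abs_le_exp_neg_integral_mul_sum_abs {ι : Type*} [Fintype ι]
    {B : ℝ → Matrix ι ι ℝ} {β : ℝ → ℝ} (hβ : Continuous β)
    (hcol : ∀ t j, ∑ i, B t i j ≤ -β t) (hoff : ∀ t i j, i ≠ j → 0 ≤ B t i j)
    {w : ℝ → ι → ℝ} (hw : ∀ t i, HasDerivAt (fun τ => w τ i) ((B t *ᵥ w t) i) t)
    {s t : ℝ} (hst : s ≤ t) :
    ∑ i, |w t i| ≤ Real.exp (-∫ u in s..t, β u) * ∑ i, |w s i| := by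
  have hwc : ∀ i, Continuous fun τ => w τ i := fun i =>
    continuous_iff_continuousAt.2 fun τ => (hw τ i).continuousAt
  exact le_exp_neg_integral_mul_of_hasDerivWithinAt_Ici_le hst hβ
    (continuous_finsetSum _ fun i _ => (hwc i).abs).continuousOn
    fun x _ => exists_hasDerivWithinAt_sum_abs_le (hcol x) (hoff x) (hw x)

/-- If B(t) is continuous, essentially non-negative, with column sums ≤ -α(t) for a locally
integrable α, then any solution of w' = B(t)w satisfies
‖w(t)‖₁ ≤ exp(-∫_s^t α) ‖w(s)‖₁ for t ≥ s ≥ 0. -/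
theorem l1_upper_bound_of_column_sums (S : ℕ)
    (B : ℝ → Matrix (Fin S) (Fin S) ℝ)
    (hBc : ∀ i j : Fin S, Continuous fun t => B t i j)
    (α : ℝ → ℝ) (hα : MeasureTheory.LocallyIntegrable α)
    (hsum : ∀ t : ℝ, ∀ j : Fin S, ∑ i : Fin S, B t i j ≤ -α t)
    (hpos : ∀ t : ℝ, ∀ i j : Fin S, i ≠ j → 0 ≤ B t i j)
    (w : ℝ → Fin S → ℝ)
    (hw : ∀ t : ℝ, ∀ i : Fin S,
      HasDerivAt (fun τ => w τ i) (∑ j : Fin S, B t i j * w t j) t) :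
    ∀ s t : ℝ, 0 ≤ s → s ≤ t →
      ∑ i : Fin S, |w t i| ≤ Real.exp (-∫ u in s..t, α u) * ∑ i : Fin S, |w s i| := by
  intro s t _ hst
  rcases isEmpty_or_nonempty (Fin S) with _ | _
  · simp
  set β : ℝ → ℝ := fun u => -Finset.univ.sup' Finset.univ_nonempty fun j => ∑ i, B u i j
  have hβ : Continuous β := (Continuous.finset_sup'_apply Finset.univ_nonempty
    fun j _ => continuous_finsetSum _ fun i _ => hBc i j).neg
  have hcol : ∀ u j, ∑ i, B u i j ≤ -β u := fun u j => by
    simp only [β, neg_neg]; exact Finset.le_sup' (fun j => ∑ i, B u i j) (Finset.mem_univ j)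
  have hαβ : ∀ u, α u ≤ β u := fun u => le_neg.2 (Finset.sup'_le _ _ fun j _ => hsum u j)
  calc ∑ i, |w t i| ≤ Real.exp (-∫ u in s..t, β u) * ∑ i, |w s i| :=
        sum_abs_le_exp_neg_integral_mul_sum_abs hβ hcol hpos hw hst
    _ ≤ Real.exp (-∫ u in s..t, α u) * ∑ i, |w s i| := by
        gcongr
        exact intervalIntegral.integral_mono_on hst
          ((hα.integrableOn_isCompact isCompact_uIcc).intervalIntegrable)
          (hβ.intervalIntegrable s t) fun u _ => hαβ u
end

section
/- Let B(t) be a family of S×S essentially non-negative matrices with column sums satisfying Σ_i b_{ij}(t) ≥ -β(t) for all j and t, where β is locally integrable. Then any solution w(t) of w'(t) = B(t)w(t) with w(s) entrywise nonnegative remains entrywise nonnegative and satisfies ‖w(t)‖₁ ≥ exp(-∫_s^t β(u) du) ‖w(s)‖₁ for all t ≥ s. -/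
/-!
Nonnegativity: off the diagonal `B` pushes every negative coordinate of `w` upwards, so the
energy `E = ∑ i, (min (w i) 0) ^ 2` of the negative part satisfies `E' ≤ 2 K E`, where `K` bounds
`∑ i, ∑ j, |b i j|` on `[s, t]`; since `E(s) = 0`, Grönwall forces `E ≡ 0`.

Growth: for `w ≥ 0` the ℓ¹ norm is `∑ i, w i`, with derivative
`∑ j, (∑ i, b i j) w j ≥ -γ ∑ i, w i`, so `exp (∫ γ) · ∑ i, w i` is monotone. As `β` is merely locally integrable, its integral need not
be differentiable; `γ` is instead the largest column deficit `max_j (-∑ i, b i j)`, which is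
continuous and lies below `β`.
-/

open Set Filter Topology Asymptotics Matrix

theorem hasDerivAt_min_zero_sq (x : ℝ) :
    HasDerivAt (fun y : ℝ => min y 0 ^ 2) (2 * min x 0) x := by
  rcases lt_trichotomy x 0 with hx | rfl | hx
  · have h : (fun y : ℝ => min y 0 ^ 2) =ᶠ[𝓝 x] fun y => y ^ 2 :=
      eventually_of_mem (Iio_mem_nhds hx) fun y (hy : y < 0) => by simp only [min_eq_left hy.le]
    simpa [min_eq_left hx.le] using (hasDerivAt_pow 2 x).congr_of_eventuallyEq h
  · rw [hasDerivAt_iff_isLittleO_nhds_zero]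
    have h : (fun y : ℝ => min y 0 ^ 2) =O[𝓝 0] fun y => y ^ 2 :=
      IsBigO.of_bound 1 (Eventually.of_forall fun y => by
        simp only [norm_pow, Real.norm_eq_abs, one_mul]
        exact pow_le_pow_left₀ (abs_nonneg _) (by grind) 2)
    simpa using h.trans_isLittleO (isLittleO_pow_id one_lt_two)
  · have h : (fun y : ℝ => min y 0 ^ 2) =ᶠ[𝓝 x] fun _ => 0 :=
      eventually_of_mem (Ioi_mem_nhds hx) fun y (hy : 0 < y) => by simp [min_eq_right hy.le]
    simpa [min_eq_right hx.le] using (hasDerivAt_const x (0 : ℝ)).congr_of_eventuallyEq h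

theorem exp_neg_integral_mul_le_of_hasDerivAt {N N' γ : ℝ → ℝ} {s t : ℝ} (hst : s ≤ t)
    (hγ : Continuous γ) (hN : ∀ u ∈ Icc s t, HasDerivAt N (N' u) u)
    (hN' : ∀ u ∈ Icc s t, -γ u * N u ≤ N' u) :
    Real.exp (-∫ u in s..t, γ u) * N s ≤ N t := by
  set F : ℝ → ℝ := fun u => ∫ v in s..u, γ v
  have hF : ∀ u, HasDerivAt F (γ u) u := fun u => hγ.integral_hasStrictDerivAt s u |>.hasDerivAt
  have hG : ∀ u ∈ Icc s t,
      HasDerivAt (fun v => Real.exp (F v) * N v) (Real.exp (F u) * (γ u * N u + N' u)) u := by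
    intro u hu
    exact (hF u).exp.fun_mul (hN u hu) |>.congr_deriv (by ring)
  have hmono : MonotoneOn (fun v => Real.exp (F v) * N v) (Icc s t) := by
    refine monotoneOn_of_hasDerivWithinAt_nonneg (convex_Icc s t)
      (fun u hu => (hG u hu).continuousAt.continuousWithinAt)
      (fun u hu => (hG u (interior_subset hu)).hasDerivWithinAt) fun u hu => ?_
    have hD : 0 ≤ γ u * N u + N' u := by linarith [hN' u (interior_subset hu)]
    positivity
  have hGst : N s ≤ Real.exp (F t) * N t := by
    simpa [F] using hmono (left_mem_Icc.2 hst) (right_mem_Icc.2 hst) hst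
  calc Real.exp (-F t) * N s ≤ Real.exp (-F t) * (Real.exp (F t) * N t) := by gcongr
    _ = N t := by rw [← mul_assoc, ← Real.exp_add, neg_add_cancel, Real.exp_zero, one_mul]

section

variable {ι : Type*} [Fintype ι]

theorem Matrix.sum_min_zero_mul_mulVec_le (M : Matrix ι ι ℝ) (hM : ∀ i j, i ≠ j → 0 ≤ M i j)
    (x : ι → ℝ) :
    ∑ i, min (x i) 0 * (M *ᵥ x) i ≤ (∑ i, ∑ j, |M i j|) * ∑ i, min (x i) 0 ^ 2 := by
  set m : ι → ℝ := fun i => min (x i) 0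
  have hterm : ∀ i j, m i * (M i j * x j) ≤ |M i j| * (m i * m j) := by
    intro i j
    rcases eq_or_ne i j with rfl | hij
    · have hmx : m i * x i = m i * m i := by grind
      rw [mul_left_comm, hmx]
      exact mul_le_mul_of_nonneg_right (le_abs_self _) (mul_self_nonneg _)
    · have hmx : m i * x j ≤ m i * m j :=
        mul_le_mul_of_nonpos_left (min_le_left _ _) (min_le_right _ _)
      rw [abs_of_nonneg (hM i j hij), mul_left_comm]
      exact mul_le_mul_of_nonneg_left hmx (hM i j hij)
  have hprod : ∀ i j, m i * m j ≤ ∑ k, m k ^ 2 := by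
    intro i j
    have hi := Finset.single_le_sum (fun k _ => sq_nonneg (m k)) (Finset.mem_univ i)
    have hj := Finset.single_le_sum (fun k _ => sq_nonneg (m k)) (Finset.mem_univ j)
    nlinarith [sq_nonneg (m i - m j)]
  calc ∑ i, m i * (M *ᵥ x) i = ∑ i, ∑ j, m i * (M i j * x j) := by
        simp only [mulVec, dotProduct, Finset.mul_sum]
    _ ≤ ∑ i, ∑ j, |M i j| * ∑ k, m k ^ 2 :=
        Finset.sum_le_sum fun i _ => Finset.sum_le_sum fun j _ =>
          (hterm i j).trans (mul_le_mul_of_nonneg_left (hprod i j) (abs_nonneg _))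
    _ = (∑ i, ∑ j, |M i j|) * ∑ k, m k ^ 2 := by simp only [Finset.sum_mul]

theorem Matrix.neg_mul_sum_le_sum_mulVec (M : Matrix ι ι ℝ) {c : ℝ}
    (hcol : ∀ j, -c ≤ ∑ i, M i j) {x : ι → ℝ} (hx : 0 ≤ x) :
    -c * ∑ i, x i ≤ ∑ i, (M *ᵥ x) i := by
  calc -c * ∑ j, x j ≤ ∑ j, (∑ i, M i j) * x j := by
        rw [Finset.mul_sum]
        exact Finset.sum_le_sum fun j _ => mul_le_mul_of_nonneg_right (hcol j) (hx j)
    _ = ∑ i, (M *ᵥ x) i := by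
        simp only [mulVec, dotProduct, Finset.sum_mul]
        exact Finset.sum_comm

theorem nonneg_of_hasDerivAt_mulVec {B : ℝ → Matrix ι ι ℝ} {w : ℝ → ι → ℝ} {s t : ℝ}
    (hB : ContinuousOn B (Icc s t)) (hpos : ∀ u ∈ Icc s t, ∀ i j, i ≠ j → 0 ≤ B u i j)
    (hw : ∀ u ∈ Icc s t, HasDerivAt w (B u *ᵥ w u) u) (hws : 0 ≤ w s) :
    ∀ u ∈ Icc s t, 0 ≤ w u := by
  obtain ⟨K, hK⟩ : ∃ K, ∀ u ∈ Icc s t, ∑ i, ∑ j, |B u i j| ≤ K := by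
    have hcont : ContinuousOn (fun u => ∑ i, ∑ j, |B u i j|) (Icc s t) := by fun_prop
    obtain ⟨K, hK⟩ := isCompact_Icc.bddAbove_image hcont
    exact ⟨K, fun u hu => hK (mem_image_of_mem _ hu)⟩
  set E : ℝ → ℝ := fun u => ∑ i, min (w u i) 0 ^ 2
  have hE0 : ∀ u, 0 ≤ E u := fun u => Finset.sum_nonneg fun i _ => sq_nonneg _
  have hE : ∀ u ∈ Icc s t, HasDerivAt E (2 * ∑ i, min (w u i) 0 * (B u *ᵥ w u) i) u := by
    intro u hu
    rw [Finset.mul_sum]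
    refine HasDerivAt.fun_sum fun i _ => ?_
    have := (hasDerivAt_min_zero_sq (w u i)).comp u (hasDerivAt_pi.1 (hw u hu) i)
    rwa [mul_assoc] at this
  have hE' : ∀ u ∈ Icc s t, 2 * ∑ i, min (w u i) 0 * (B u *ᵥ w u) i ≤ 2 * K * E u + 0 := by
    intro u hu
    have := (B u).sum_min_zero_mul_mulVec_le (hpos u hu) (w u)
    nlinarith [hK u hu, hE0 u]
  have hEs : E s ≤ 0 :=
    (Finset.sum_eq_zero fun i _ => by rw [min_eq_right (show 0 ≤ w s i from hws i)]; norm_num).le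
  intro u hu i
  have hEu : E u ≤ 0 := by
    simpa [gronwallBound_ε0_δ0] using le_gronwallBound_of_liminf_deriv_right_le
      (fun x hx => (hE x hx).continuousAt.continuousWithinAt)
      (fun x hx _ hr => (hE x (Ico_subset_Icc_self hx)).hasDerivWithinAt.liminf_right_slope_le hr)
      hEs (fun x hx => hE' x (Ico_subset_Icc_self hx)) u hu
  have hmin : min (w u i) 0 ^ 2 = 0 :=
    (Finset.sum_eq_zero_iff_of_nonneg fun j _ => sq_nonneg _).1 (hEu.antisymm (hE0 u)) i
      (Finset.mem_univ i)
  exact min_eq_right_iff.1 (pow_eq_zero_iff two_ne_zero |>.1 hmin)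

theorem exists_continuous_le_of_neg_le_column_sums [Nonempty ι] {B : ℝ → Matrix ι ι ℝ}
    (hB : Continuous B) {β : ℝ → ℝ} (hβ : ∀ u j, -β u ≤ ∑ i, B u i j) :
    ∃ γ : ℝ → ℝ, Continuous γ ∧ γ ≤ β ∧ ∀ u j, -γ u ≤ ∑ i, B u i j := by
  refine ⟨fun u => Finset.univ.sup' Finset.univ_nonempty fun j => -∑ i, B u i j,
    Continuous.finset_sup'_apply _ fun j _ => by fun_prop,
    fun u => Finset.sup'_le _ _ fun j _ => neg_le.1 (hβ u j),
    fun u j => neg_le.2 (Finset.le_sup' (fun j => -∑ i, B u i j) (Finset.mem_univ j))⟩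

end

/-- If B(t) is essentially non-negative with column sums ≥ -β(t), β locally integrable,
then a solution of w' = B(t)w with nonnegative initial data stays nonnegative and
satisfies ‖w(t)‖₁ ≥ exp(-∫_s^t β) ‖w(s)‖₁. -/
theorem l1_lower_bound_of_column_sums (S : ℕ)
    (B : ℝ → Matrix (Fin S) (Fin S) ℝ)
    (hBc : ∀ i j : Fin S, Continuous fun t => B t i j)
    (β : ℝ → ℝ) (hβ : MeasureTheory.LocallyIntegrable β)
    (hsum : ∀ t : ℝ, ∀ j : Fin S, -β t ≤ ∑ i : Fin S, B t i j)
    (hpos : ∀ t : ℝ, ∀ i j : Fin S, i ≠ j → 0 ≤ B t i j)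
    (w : ℝ → Fin S → ℝ)
    (hw : ∀ t : ℝ, ∀ i : Fin S,
      HasDerivAt (fun τ => w τ i) (∑ j : Fin S, B t i j * w t j) t) :
    ∀ s t : ℝ, s ≤ t → (∀ i, 0 ≤ w s i) →
      (∀ i, 0 ≤ w t i) ∧
      Real.exp (-∫ u in s..t, β u) * ∑ i : Fin S, |w s i| ≤ ∑ i : Fin S, |w t i| := by
  intro s t hst hws
  have hB : Continuous B := continuous_matrix hBc
  have hnn : ∀ u ∈ Icc s t, 0 ≤ w u := nonneg_of_hasDerivAt_mulVec hB.continuousOn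
    (fun u _ => hpos u) (fun u _ => hasDerivAt_pi.2 (hw u)) hws
  refine ⟨hnn t (right_mem_Icc.2 hst), ?_⟩
  rcases isEmpty_or_nonempty (Fin S) with hS | hS
  · simp
  obtain ⟨γ, hγ, hγβ, hγcol⟩ := exists_continuous_le_of_neg_le_column_sums hB hsum
  have hint : ∫ u in s..t, γ u ≤ ∫ u in s..t, β u :=
    intervalIntegral.integral_mono_on hst (hγ.intervalIntegrable s t)
      (hβ.integrableOn_isCompact isCompact_uIcc).intervalIntegrable fun u _ => hγβ u
  simp only [abs_of_nonneg (hws _), abs_of_nonneg (hnn t (right_mem_Icc.2 hst) _)]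
  calc Real.exp (-∫ u in s..t, β u) * ∑ i, w s i
      ≤ Real.exp (-∫ u in s..t, γ u) * ∑ i, w s i := by
        gcongr
        exact Finset.sum_nonneg fun i _ => hws i
    _ ≤ ∑ i, w t i := exp_neg_integral_mul_le_of_hasDerivAt hst hγ
        (fun u _ => HasDerivAt.fun_sum fun i _ => hw u i)
        (fun u hu => (B u).neg_mul_sum_le_sum_mulVec (hγcol u) (hnn u hu))
end

section
/- Let X(t) be a finite homogeneous Markov chain on {0,…,S} with batch arrival intensities q_{k,k+i} = λ for i ≥ 2, q_{k,k+1} = 0, and service intensities q_{k,k-1} = μ_k > 0. With weights d₁ = 1, d_{k+1} = d_k √(μ_k/λ), the transformed reduced matrix B** has diagonal entries -((S-k+1)λ + μ_k) for k < S and -μ_S for k = S, superdiagonal entries √(λ μ_k), and subdiagonal entries -√(λ μ_k). For any solution w(t) of w' = B** w, d/dt ‖w(t)‖₂² = 2 Σ_k b**_{kk} w_k(t)² ≤ -2β* ‖w(t)‖₂², where β* = min(Sλ + μ₁, (S-1)λ + μ₂, …, 2λ + μ_{S-1}, μ_S); hence ‖w(t)‖₂ ≤ e^{-β* t} ‖w(0)‖₂.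 -/
/-!
Since `B` is skew-symmetric off the diagonal, only the diagonal survives in the quadratic form
`⟨w, B w⟩`, which is half the derivative of `‖w‖₂²`. Each diagonal entry is at most `-β*`, so
`‖w‖₂²` satisfies `f' ≤ -2β* f`, and Grönwall's inequality gives `‖w(t)‖₂² ≤ e^{-2β* t} ‖w(0)‖₂²`.
-/
open Finset Matrix

section

variable {ι : Type*} [Fintype ι]

/-- The off-diagonal terms cancel in pairs `(i, j)`, `(j, i)`, so this holds in any
characteristic. -/
theorem Matrix.dotProduct_mulVec_eq_sum_diag_of_skew {R : Type*} [CommRing R] [DecidableEq ι]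
    {B : Matrix ι ι R} (hB : ∀ i j, i ≠ j → B j i = -B i j) (x : ι → R) :
    x ⬝ᵥ (B *ᵥ x) = ∑ i, B i i * x i ^ 2 := by
  set f : ι × ι → R := fun p => if p.1 = p.2 then 0 else x p.1 * B p.1 p.2 * x p.2
  have hoff : ∑ p, f p = 0 := by
    refine sum_involution (fun p _ => p.swap) (fun p _ => ?_) (fun p _ hp hswap => ?_)
      (fun p _ => mem_univ _) (fun p _ => p.swap_swap)
    · rcases eq_or_ne p.1 p.2 with h | h
      · simp [f, h]
      · simp only [f, Prod.fst_swap, Prod.snd_swap, if_neg h, if_neg h.symm, hB _ _ h]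
        ring
    · exact hp (if_pos (congrArg Prod.snd hswap))
  calc x ⬝ᵥ (B *ᵥ x)
        = ∑ p : ι × ι, ((if p.1 = p.2 then B p.1 p.1 * x p.1 ^ 2 else 0) + f p) := by
        rw [Fintype.sum_prod_type]
        simp only [dotProduct, mulVec, mul_sum]
        refine sum_congr rfl fun i _ => sum_congr rfl fun j _ => ?_
        dsimp only [f]
        split_ifs with h
        · subst h; ring
        · ring
    _ = ∑ i, B i i * x i ^ 2 := by
        rw [sum_add_distrib, hoff, add_zero, Fintype.sum_prod_type]
        simp

theorem hasDerivAt_sum_sq_of_hasDerivAt_mulVec {A : Matrix ι ι ℝ} {w : ℝ → ι → ℝ} {t : ℝ}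
    (hw : ∀ i, HasDerivAt (fun τ => w τ i) ((A *ᵥ w t) i) t) :
    HasDerivAt (fun τ => ∑ k, w τ k ^ 2) (2 * (w t ⬝ᵥ (A *ᵥ w t))) t := by
  refine (HasDerivAt.fun_sum (u := univ) (A := fun k τ => w τ k ^ 2)
    (fun k _ => (hw k).pow 2)).congr_deriv ?_
  simp only [dotProduct, mul_sum]
  refine sum_congr rfl fun k _ => ?_
  ring

theorem sum_mul_sq_le_mul_sum_sq {c : ι → ℝ} {C : ℝ} (hc : ∀ i, c i ≤ C) (x : ι → ℝ) :
    ∑ i, c i * x i ^ 2 ≤ C * ∑ i, x i ^ 2 := by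
  rw [mul_sum]
  exact sum_le_sum fun i _ => mul_le_mul_of_nonneg_right (hc i) (sq_nonneg _)

end

theorem le_mul_exp_of_hasDerivAt_le_mul {f f' : ℝ → ℝ} {K : ℝ}
    (hf : ∀ t, HasDerivAt f (f' t) t) (bound : ∀ t, f' t ≤ K * f t) {t : ℝ} (ht : 0 ≤ t) :
    f t ≤ f 0 * Real.exp (K * t) := by
  have := le_gronwallBound_of_liminf_deriv_right_le (f' := f') (δ := f 0) (ε := 0)
    (a := 0) (b := t) (fun x _ => (hf x).continuousAt.continuousWithinAt)
    (fun x _ r hr => by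
      simpa [slope, smul_eq_mul] using (hf x).hasDerivWithinAt.liminf_right_slope_le hr)
    le_rfl (fun x _ => by simpa using bound x) t ⟨ht, le_rfl⟩
  rwa [gronwallBound_ε0, sub_zero] at this

theorem batch_arrival_l2_decay_general (n : ℕ)
    (lam : ℝ)
    (mu : Fin (n + 1) → ℝ)
    (B : Matrix (Fin (n + 1)) (Fin (n + 1)) ℝ)
    (hB : B = Matrix.of fun i j : Fin (n + 1) =>
      if i = j then
        (if (i : ℕ) = n then -(mu i)
         else -(((n + 1 - (i : ℕ) : ℕ) : ℝ) * lam + mu i))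
      else if (j : ℕ) = (i : ℕ) + 1 then Real.sqrt (lam * mu i)
      else if (i : ℕ) = (j : ℕ) + 1 then -Real.sqrt (lam * mu j)
      else 0)
    (βs : ℝ)
    (hβs : βs = Finset.univ.inf' Finset.univ_nonempty fun k : Fin (n + 1) => -(B k k))
    (w : ℝ → Fin (n + 1) → ℝ)
    (hw : ∀ t : ℝ, ∀ i : Fin (n + 1),
      HasDerivAt (fun τ => w τ i) (∑ j : Fin (n + 1), B i j * w t j) t) :
    (∀ t : ℝ,
      HasDerivAt (fun τ => ∑ k : Fin (n + 1), (w τ k) ^ 2)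
        (2 * ∑ k : Fin (n + 1), B k k * (w t k) ^ 2) t) ∧
    (∀ t : ℝ,
      2 * ∑ k : Fin (n + 1), B k k * (w t k) ^ 2 ≤
        -(2 * βs) * ∑ k : Fin (n + 1), (w t k) ^ 2) ∧
    (∀ t : ℝ, 0 ≤ t →
      Real.sqrt (∑ k : Fin (n + 1), (w t k) ^ 2) ≤
        Real.exp (-βs * t) * Real.sqrt (∑ k : Fin (n + 1), (w 0 k) ^ 2)) := by
  have hskew : ∀ i j, i ≠ j → B j i = -B i j := by
    intro i j hij
    subst hB
    simp only [Matrix.of_apply, if_neg hij, if_neg (Ne.symm hij)]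
    split_ifs <;> first | omega | ring
  have hderiv : ∀ t, HasDerivAt (fun τ => ∑ k, w τ k ^ 2) (2 * ∑ k, B k k * w t k ^ 2) t :=
    fun t => dotProduct_mulVec_eq_sum_diag_of_skew hskew (w t) ▸
      hasDerivAt_sum_sq_of_hasDerivAt_mulVec (hw t)
  have hdiag : ∀ k, B k k ≤ -βs := fun k => by
    have := hβs ▸ inf'_le (fun k => -B k k) (mem_univ k)
    linarith
  have hdecay : ∀ t, 2 * ∑ k, B k k * w t k ^ 2 ≤ -(2 * βs) * ∑ k, w t k ^ 2 := fun t => by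
    have := sum_mul_sq_le_mul_sum_sq hdiag (w t)
    linarith
  refine ⟨hderiv, hdecay, fun t ht => ?_⟩
  calc √(∑ k, w t k ^ 2) ≤ √((∑ k, w 0 k ^ 2) * Real.exp (-(2 * βs) * t)) :=
        Real.sqrt_le_sqrt (le_mul_exp_of_hasDerivAt_le_mul hderiv hdecay ht)
    _ = Real.exp (-βs * t) * √(∑ k, w 0 k ^ 2) := by
        rw [Real.sqrt_mul' _ (Real.exp_pos _).le, ← Real.exp_half, mul_comm]
        ring_nf

/-- For the queue with batch arrivals (rate λ for batches of size ≥ 2) and services μ_k,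
the transformed reduced matrix B** has skew-symmetric off-diagonal part, so
d/dt ‖w‖₂² = 2 Σ_k b**_{kk} w_k² ≤ -2β* ‖w‖₂², where β* is the minimum of the negated
diagonal entries, and hence ‖w(t)‖₂ ≤ e^{-β* t} ‖w(0)‖₂. -/
theorem batch_arrival_l2_decay (n : ℕ)
    (lam : ℝ) (hlampos : 0 < lam)
    (mu : Fin (n + 1) → ℝ) (hmu : ∀ k, 0 < mu k)
    (B : Matrix (Fin (n + 1)) (Fin (n + 1)) ℝ)
    (hB : B = Matrix.of fun i j : Fin (n + 1) =>
      if i = j then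
        (if (i : ℕ) = n then -(mu i)
         else -(((n + 1 - (i : ℕ) : ℕ) : ℝ) * lam + mu i))
      else if (j : ℕ) = (i : ℕ) + 1 then Real.sqrt (lam * mu i)
      else if (i : ℕ) = (j : ℕ) + 1 then -Real.sqrt (lam * mu j)
      else 0)
    (βs : ℝ)
    (hβs : βs = Finset.univ.inf' Finset.univ_nonempty fun k : Fin (n + 1) => -(B k k))
    (w : ℝ → Fin (n + 1) → ℝ)
    (hw : ∀ t : ℝ, ∀ i : Fin (n + 1),
      HasDerivAt (fun τ => w τ i) (∑ j : Fin (n + 1), B i j * w t j) t) :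
    (∀ t : ℝ,
      HasDerivAt (fun τ => ∑ k : Fin (n + 1), (w τ k) ^ 2)
        (2 * ∑ k : Fin (n + 1), B k k * (w t k) ^ 2) t) ∧
    (∀ t : ℝ,
      2 * ∑ k : Fin (n + 1), B k k * (w t k) ^ 2 ≤
        -(2 * βs) * ∑ k : Fin (n + 1), (w t k) ^ 2) ∧
    (∀ t : ℝ, 0 ≤ t →
      Real.sqrt (∑ k : Fin (n + 1), (w t k) ^ 2) ≤
        Real.exp (-βs * t) * Real.sqrt (∑ k : Fin (n + 1), (w 0 k) ^ 2)) :=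
  batch_arrival_l2_decay_general n lam mu B hB βs hβs w hw
end

section
/- Let A(t) be a family of S×S matrices and D = diag(d₁,…,d_S) an invertible diagonal matrix with nonzero real entries. Suppose x(t) solves x' = A(t)x on [t₁,t₂], each coordinate x_i(t) has the same sign as d_i throughout [t₁,t₂], and the matrix Ã(t) = D A(t) D⁻¹ has all column sums at most -α(t). Then the function N(t) = Σ_k d_k x_k(t) satisfies N(t) ≤ exp(-∫_{t₁}^{t} α(τ) dτ) N(t₁) for t ∈ [t₁,t₂]. -/
/-!
With `N = d ⬝ᵥ x`, the identity `d ⬝ᵥ (A x) = ∑ⱼ (∑ᵢ (D A D⁻¹)ᵢⱼ) dⱼ xⱼ` and the positivity of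
every `dⱼ xⱼ` turn the column-sum bound into `N' ≤ -α N` with `N > 0`. Hence `log N` has
derivative at most `-α`, and integrating this differential inequality gives the bound; working
with `log N` rather than `exp (∫ α) * N` avoids differentiating `∫ α`, which needs `α` continuous.
-/

open Set MeasureTheory Matrix

theorem le_exp_integral_mul_of_hasDerivWithinAt_le {N N' g : ℝ → ℝ} {a b : ℝ} (hab : a ≤ b)
    (hcont : ContinuousOn N (Icc a b))
    (hderiv : ∀ t ∈ Ioo a b, HasDerivWithinAt N (N' t) (Ioi t) t)
    (hpos : ∀ t ∈ Icc a b, 0 < N t) (hg : IntegrableOn g (Icc a b))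
    (hle : ∀ t ∈ Ioo a b, N' t ≤ g t * N t) :
    N b ≤ Real.exp (∫ t in a..b, g t) * N a := by
  have hN_ne : ∀ t ∈ Icc a b, N t ≠ 0 := fun t ht => (hpos t ht).ne'
  have hlog : Real.log (N b) - Real.log (N a) ≤ ∫ t in a..b, g t := by
    refine intervalIntegral.sub_le_integral_of_hasDeriv_right_of_le hab (hcont.log hN_ne)
      (fun t ht => (hderiv t ht).log (hN_ne t (Ioo_subset_Icc_self ht))) hg fun t ht => ?_
    rw [div_le_iff₀ (hpos t (Ioo_subset_Icc_self ht))]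
    exact hle t ht
  calc N b = Real.exp (Real.log (N b)) := (Real.exp_log (hpos b (right_mem_Icc.2 hab))).symm
    _ ≤ Real.exp ((∫ t in a..b, g t) + Real.log (N a)) := Real.exp_le_exp.2 (by linarith)
    _ = Real.exp (∫ t in a..b, g t) * N a := by
      rw [Real.exp_add, Real.exp_log (hpos a (left_mem_Icc.2 hab))]

namespace Matrix

variable {n 𝕜 : Type*} [Fintype n] [DecidableEq n]

theorem dotProduct_mulVec_eq_sum_colSum_mul [Field 𝕜] (A : Matrix n n 𝕜) {d : n → 𝕜}
    (hd : ∀ i, d i ≠ 0) (v : n → 𝕜) :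
    d ⬝ᵥ (A *ᵥ v) =
      ∑ j, (∑ i, (diagonal d * A * diagonal fun k => (d k)⁻¹) i j) * (d j * v j) := by
  simp only [dotProduct, mulVec, mul_diagonal, diagonal_mul, Finset.mul_sum, Finset.sum_mul]
  rw [Finset.sum_comm]
  refine Finset.sum_congr rfl fun j _ => Finset.sum_congr rfl fun i _ => ?_
  rw [mul_assoc _ (d j)⁻¹, inv_mul_cancel_left₀ (hd j), mul_assoc]

theorem dotProduct_mulVec_le_of_colSum_le [Field 𝕜] [LinearOrder 𝕜] [IsStrictOrderedRing 𝕜]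
    (A : Matrix n n 𝕜) {d v : n → 𝕜} (hd : ∀ i, d i ≠ 0) (hv : ∀ i, 0 ≤ d i * v i) {c : 𝕜}
    (hcol : ∀ j, ∑ i, (diagonal d * A * diagonal fun k => (d k)⁻¹) i j ≤ c) :
    d ⬝ᵥ (A *ᵥ v) ≤ c * (d ⬝ᵥ v) := by
  rw [dotProduct_mulVec_eq_sum_colSum_mul A hd, dotProduct, Finset.mul_sum]
  exact Finset.sum_le_sum fun j _ => mul_le_mul_of_nonneg_right (hcol j) (hv j)

end Matrix

theorem diff_ineq_weighted_bound_general (S : ℕ)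
    (A : ℝ → Matrix (Fin S) (Fin S) ℝ)
    (d : Fin S → ℝ) (hd : ∀ i, d i ≠ 0)
    (t₁ t₂ : ℝ)
    (x : ℝ → Fin S → ℝ)
    (hx : ∀ t ∈ Set.Icc t₁ t₂, ∀ i : Fin S,
      HasDerivAt (fun τ => x τ i) (∑ j : Fin S, A t i j * x t j) t)
    (hsign : ∀ t ∈ Set.Icc t₁ t₂, ∀ i : Fin S, 0 < d i * x t i)
    (α : ℝ → ℝ) (hα : IntervalIntegrable α MeasureTheory.volume t₁ t₂)
    (hsum : ∀ t ∈ Set.Icc t₁ t₂, ∀ j : Fin S,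
      ∑ i : Fin S,
        (Matrix.diagonal d * A t * Matrix.diagonal fun k => (d k)⁻¹) i j ≤ -α t) :
    ∀ t ∈ Set.Icc t₁ t₂,
      ∑ k : Fin S, d k * x t k ≤
        Real.exp (-∫ τ in t₁..t, α τ) * ∑ k : Fin S, d k * x t₁ k := by
  intro t ht
  rcases isEmpty_or_nonempty (Fin S) with hS | hS
  · simp
  have hsub : Icc t₁ t ⊆ Icc t₁ t₂ := Icc_subset_Icc_right ht.2
  have hN : ∀ τ ∈ Icc t₁ t₂, HasDerivAt (fun s => d ⬝ᵥ x s) (d ⬝ᵥ (A τ *ᵥ x τ)) τ :=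
    fun τ hτ => HasDerivAt.fun_sum fun k _ => (hx τ hτ k).const_mul (d k)
  rw [← intervalIntegral.integral_neg]
  refine le_exp_integral_mul_of_hasDerivWithinAt_le (N := fun s => d ⬝ᵥ x s) ht.1
    (fun τ hτ => (hN τ (hsub hτ)).continuousAt.continuousWithinAt)
    (fun τ hτ => (hN τ (hsub (Ioo_subset_Icc_self hτ))).hasDerivWithinAt)
    (fun τ hτ => Finset.sum_pos (fun k _ => hsign τ (hsub hτ) k) Finset.univ_nonempty)
    ((intervalIntegrable_iff_integrableOn_Icc_of_le ht.1).1 ?_).neg fun τ hτ => ?_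
  · exact hα.mono_set (by rw [uIcc_of_le ht.1, uIcc_of_le (ht.1.trans ht.2)]; exact hsub)
  have hτ' := hsub (Ioo_subset_Icc_self hτ)
  exact dotProduct_mulVec_le_of_colSum_le (A τ) hd (fun i => (hsign τ hτ' i).le) (hsum τ hτ')

/-- Differential-inequalities method: if on [t₁,t₂] each coordinate of the solution x of
x' = A(t)x has the same (fixed) sign as d_i, and the column sums of D A(t) D⁻¹ are at
most -α(t), then N(t) = Σ_k d_k x_k(t) satisfies
N(t) ≤ exp(-∫_{t₁}^t α) N(t₁). -/
theorem diff_ineq_weighted_bound (S : ℕ)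
    (A : ℝ → Matrix (Fin S) (Fin S) ℝ)
    (d : Fin S → ℝ) (hd : ∀ i, d i ≠ 0)
    (t₁ t₂ : ℝ) (ht : t₁ ≤ t₂)
    (x : ℝ → Fin S → ℝ)
    (hx : ∀ t ∈ Set.Icc t₁ t₂, ∀ i : Fin S,
      HasDerivAt (fun τ => x τ i) (∑ j : Fin S, A t i j * x t j) t)
    (hsign : ∀ t ∈ Set.Icc t₁ t₂, ∀ i : Fin S, 0 < d i * x t i)
    (α : ℝ → ℝ) (hα : IntervalIntegrable α MeasureTheory.volume t₁ t₂)
    (hsum : ∀ t ∈ Set.Icc t₁ t₂, ∀ j : Fin S,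
      ∑ i : Fin S,
        (Matrix.diagonal d * A t * Matrix.diagonal fun k => (d k)⁻¹) i j ≤ -α t) :
    ∀ t ∈ Set.Icc t₁ t₂,
      ∑ k : Fin S, d k * x t k ≤
        Real.exp (-∫ τ in t₁..t, α τ) * ∑ k : Fin S, d k * x t₁ k :=
  diff_ineq_weighted_bound_general S A d hd t₁ t₂ x hx hsign α hα hsum
end

section
/- Let B be the S×S reduced matrix of a finite birth–death chain (b_{kk} = -(λ_{k-1}+μ_k) along the appropriate indexing after conjugation) and let T be the upper triangular all-ones matrix. If B is the matrix given by (2.07) for a birth–death process with birth rates λ_k and death rates μ_k, then T B T⁻¹ is tridiagonal with diagonal entries -(λ_{k-1} + μ_k), superdiagonal entries μ_k, and subdiagonal entries λ_k. -/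
/-!
Multiplying by the all-ones upper triangular matrix `T` takes suffix sums down the columns
(`(T * M) i j = ∑_{k ≥ i} M k j`) and prefix sums along the rows (`(M * T) i j = ∑_{k ≤ j} M i k`).
The columns of `B` and the rows of the tridiagonal target `C` are discrete differences of the same kernel
`e i j = λ_i [i = j + 1] - μ_{i+1} [i = j] - λ_0 [i = 0]`, so both `T * B` and `C * T` telescope
to `e`; the boundary term of the suffix sums is `e S j`, which vanishes because `λ_S = 0`.
Since `det T = 1`, `T * B = C * T` gives `T * B * T⁻¹ = C`.
-/

open Matrix Finset

variable {R : Type*} [CommRing R] {n : ℕ}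

variable (R n) in
def upperOnes : Matrix (Fin n) (Fin n) R :=
  of fun i j => if i ≤ j then 1 else 0

theorem det_upperOnes : (upperOnes R n).det = 1 := by
  rw [det_of_isUpperTriangular (M := upperOnes R n) fun i j hji => if_neg (not_le.2 hji)]
  simp [upperOnes]

theorem upperOnes_mulVec_apply_of_eq_sub {v : Fin n → R} {f : ℕ → R}
    (hv : ∀ k : Fin n, v k = f k - f (k + 1)) (hf : f n = 0) (i : Fin n) :
    (upperOnes R n *ᵥ v) i = f i := by
  calc (upperOnes R n *ᵥ v) i
      = ∑ k ∈ range n, if (i : ℕ) ≤ k then f k - f (k + 1) else 0 := by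
        simp only [mulVec, dotProduct, upperOnes, of_apply, ite_mul, one_mul, zero_mul, hv,
          Fin.le_def]
        exact Fin.sum_univ_eq_sum_range (fun k => if (i : ℕ) ≤ k then f k - f (k + 1) else 0) n
    _ = ∑ k ∈ Ico (i : ℕ) n, (f k - f (k + 1)) := by
        rw [← sum_filter]
        congr 1
        ext k
        simp only [mem_filter, mem_range, mem_Ico]
        omega
    _ = f i := by
        simpa only [neg_sub_neg, hf, neg_zero, zero_sub, neg_neg] using
          sum_Ico_sub (fun k => -f k) i.is_le'

theorem vecMul_upperOnes_apply_of_eq_sub {v : Fin n → R} {f : ℕ → R}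
    (hv : ∀ k : Fin n, v k = f (k + 1) - f k) (hf : f 0 = 0) (j : Fin n) :
    (v ᵥ* upperOnes R n) j = f (j + 1) := by
  calc (v ᵥ* upperOnes R n) j
      = ∑ k ∈ range n, if k ≤ (j : ℕ) then f (k + 1) - f k else 0 := by
        simp only [vecMul, dotProduct, upperOnes, of_apply, mul_ite, mul_one, mul_zero, hv,
          Fin.le_def]
        exact Fin.sum_univ_eq_sum_range (fun k => if k ≤ (j : ℕ) then f (k + 1) - f k else 0) n
    _ = ∑ k ∈ range (j + 1), (f (k + 1) - f k) := by
        rw [← sum_filter]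
        congr 1
        ext k
        simp only [mem_filter, mem_range]
        omega
    _ = f (j + 1) := by rw [sum_range_sub, hf, sub_zero]

variable (lam mu : ℕ → R)

variable (n) in
/-- The transposed intensity matrix: column `j` carries the rates out of state `j`. -/
def birthDeathMatrix : Matrix (Fin (n + 1)) (Fin (n + 1)) R :=
  of fun i j =>
    if (j : ℕ) = i + 1 then mu (i + 1)
    else if (i : ℕ) = j + 1 then lam j
    else if i = j then -(lam i + mu i)
    else 0

def reducedMatrix (A : Matrix (Fin (n + 1)) (Fin (n + 1)) R) : Matrix (Fin n) (Fin n) R :=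
  of fun i j => A i.succ j.succ - A i.succ 0

variable (n) in
def birthDeathTridiagonal : Matrix (Fin n) (Fin n) R :=
  of fun i j =>
    if i = j then -(lam i + mu (i + 1))
    else if (j : ℕ) = i + 1 then mu (i + 1)
    else if (i : ℕ) = j + 1 then lam i
    else 0

theorem upperOnes_mul_reducedMatrix_eq_birthDeathTridiagonal_mul (hlam : lam n = 0) :
    upperOnes R n * reducedMatrix (birthDeathMatrix n lam mu) =
      birthDeathTridiagonal n lam mu * upperOnes R n := by
  ext i j
  have hB : (upperOnes R n * reducedMatrix (birthDeathMatrix n lam mu)) i j =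
      (if (i : ℕ) = j + 1 then lam i else 0) - (if (i : ℕ) = j then mu (i + 1) else 0) -
        (if (i : ℕ) = 0 then lam 0 else 0) :=
    upperOnes_mulVec_apply_of_eq_sub (f := fun a => (if a = j + 1 then lam a else 0) -
        (if a = j then mu (a + 1) else 0) - (if a = 0 then lam 0 else 0))
      (fun k => by
        simp only [reducedMatrix, birthDeathMatrix, of_apply, Fin.val_succ, Fin.val_zero,
          Fin.ext_iff]
        grind)
      (by grind) i
  have hC : (birthDeathTridiagonal n lam mu * upperOnes R n) i j =
      (if (i : ℕ) = j + 1 then lam i else 0) - (if (i : ℕ) + 1 = j + 1 then mu (i + 1) else 0) -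
        (if (i : ℕ) = 0 then lam 0 else 0) :=
    vecMul_upperOnes_apply_of_eq_sub (f := fun b => (if (i : ℕ) = b then lam i else 0) -
        (if (i : ℕ) + 1 = b then mu (i + 1) else 0) - (if (i : ℕ) = 0 then lam 0 else 0))
      (fun k => by simp only [birthDeathTridiagonal, of_apply, Fin.ext_iff]; grind)
      (by grind) j
  simp only [hB, hC, Nat.add_right_cancel_iff]

theorem birth_death_reduced_conjugation_general (S : ℕ)
    (lam mu : ℕ → ℝ) (hlamS : lam S = 0)
    (A : Matrix (Fin (S + 1)) (Fin (S + 1)) ℝ)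
    (hA : A = Matrix.of fun i j : Fin (S + 1) =>
      if (j : ℕ) = (i : ℕ) + 1 then mu ((i : ℕ) + 1)
      else if (i : ℕ) = (j : ℕ) + 1 then lam (j : ℕ)
      else if i = j then -(lam (i : ℕ) + mu (i : ℕ))
      else 0)
    (B : Matrix (Fin S) (Fin S) ℝ)
    (hB : B = Matrix.of fun i j : Fin S =>
      A (Fin.succ i) (Fin.succ j) - A (Fin.succ i) 0)
    (T : Matrix (Fin S) (Fin S) ℝ)
    (hT : T = Matrix.of fun i j : Fin S => if i ≤ j then (1 : ℝ) else 0) :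
    T * B * T⁻¹ = Matrix.of fun i j : Fin S =>
      if i = j then -(lam (i : ℕ) + mu ((i : ℕ) + 1))
      else if (j : ℕ) = (i : ℕ) + 1 then mu ((i : ℕ) + 1)
      else if (i : ℕ) = (j : ℕ) + 1 then lam (i : ℕ)
      else 0 := by
  subst hA hB hT
  have hdet : IsUnit (upperOnes ℝ S).det := by rw [det_upperOnes]; exact isUnit_one
  calc upperOnes ℝ S * reducedMatrix (birthDeathMatrix S lam mu) * (upperOnes ℝ S)⁻¹
      = birthDeathTridiagonal S lam mu * upperOnes ℝ S * (upperOnes ℝ S)⁻¹ := by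
        rw [upperOnes_mul_reducedMatrix_eq_birthDeathTridiagonal_mul lam mu hlamS]
    _ = birthDeathTridiagonal S lam mu := mul_nonsing_inv_cancel_right _ _ hdet

/-- For a finite birth-death chain on {0,…,S} with transposed intensity matrix A
(a_{i,i+1} = μ_{i+1}, a_{i+1,i} = λ_i, a_{ii} = -(λ_i + μ_i), μ₀ = 0, λ_S = 0), the
reduced matrix B (b_{ij} = a_{ij} - a_{i0} for 1 ≤ i,j ≤ S) conjugated by the upper
triangular all-ones matrix T is tridiagonal with diagonal -(λ_{k-1} + μ_k),
superdiagonal μ_k and subdiagonal λ_k. -/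
theorem birth_death_reduced_conjugation (S : ℕ) (hS : 0 < S)
    (lam mu : ℕ → ℝ) (hmu0 : mu 0 = 0) (hlamS : lam S = 0)
    (A : Matrix (Fin (S + 1)) (Fin (S + 1)) ℝ)
    (hA : A = Matrix.of fun i j : Fin (S + 1) =>
      if (j : ℕ) = (i : ℕ) + 1 then mu ((i : ℕ) + 1)
      else if (i : ℕ) = (j : ℕ) + 1 then lam (j : ℕ)
      else if i = j then -(lam (i : ℕ) + mu (i : ℕ))
      else 0)
    (B : Matrix (Fin S) (Fin S) ℝ)
    (hB : B = Matrix.of fun i j : Fin S =>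
      A (Fin.succ i) (Fin.succ j) - A (Fin.succ i) 0)
    (T : Matrix (Fin S) (Fin S) ℝ)
    (hT : T = Matrix.of fun i j : Fin S => if i ≤ j then (1 : ℝ) else 0) :
    T * B * T⁻¹ = Matrix.of fun i j : Fin S =>
      if i = j then -(lam (i : ℕ) + mu ((i : ℕ) + 1))
      else if (j : ℕ) = (i : ℕ) + 1 then mu ((i : ℕ) + 1)
      else if (i : ℕ) = (j : ℕ) + 1 then lam (i : ℕ)
      else 0 :=
  birth_death_reduced_conjugation_general S lam mu hlamS A hA B hB T hT
end

section
/- Suppose α: [0,∞) → ℝ is a continuous 1-periodic function and w(t) satisfies ‖w(t)‖ ≤ exp(-∫_s^t α(u)du) ‖w(s)‖ for all t ≥ s. Let ᾱ = ∫_0^1 α(u)du. Then for all t ≥ s, ‖w(t)‖ ≤ e^{2M} e^{-ᾱ(t-s)} ‖w(s)‖, where M = sup_{0≤τ≤1} |∫_0^τ (α(u) - ᾱ) du|. In particular, if ᾱ > 0 then ‖w(t)‖ → 0 as t → ∞ at exponential rate ᾱ. -/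
/-!
With `F τ = ∫ u in 0..τ, (α u - ᾱ)` one has `∫ u in s..t, α u = ᾱ (t - s) + F t - F s`.
Since `α - ᾱ` has zero mean over a period, `F` is itself `1`-periodic, so the bound `|F| ≤ M`
read off on `[0, 1]` holds on all of `ℝ`. Hence `-∫ u in s..t, α u ≤ 2 M - ᾱ (t - s)`.
-/

open Filter MeasureTheory intervalIntegral

namespace Function.Periodic

theorem periodic_intervalIntegral_of_integral_eq_zero {E : Type*} [NormedAddCommGroup E]
    [NormedSpace ℝ E] {f : ℝ → E} {T : ℝ} (hf : Periodic f T)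
    (hint : ∀ a b, IntervalIntegrable f volume a b) (hzero : ∫ x in 0..T, f x = 0) :
    Periodic (fun t => ∫ x in 0..t, f x) T := fun t => by
  simp only [hf.intervalIntegral_add_eq_add 0 t hint, zero_add, hzero, add_zero]

theorem le_iSup_Icc {α : Type*} [ConditionallyCompleteLinearOrder α] [TopologicalSpace α]
    [ClosedIciTopology α] {g : ℝ → α} {T : ℝ} (hg : Periodic g T) (hT : 0 < T)
    (hcont : Continuous g) (x : ℝ) : g x ≤ ⨆ y : Set.Icc 0 T, g y := by
  obtain ⟨y, hy, hxy⟩ := hg.exists_mem_Ico₀ hT x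
  have hbdd : BddAbove (Set.range fun y : Set.Icc 0 T => g y) :=
    (isCompact_range (hcont.comp continuous_subtype_val)).bddAbove
  exact hxy ▸ le_ciSup hbdd ⟨y, Set.Ico_subset_Icc_self hy⟩

end Function.Periodic

theorem intervalIntegral_eq_mul_add_sub_primitive {f : ℝ → ℝ}
    (hf : ∀ a b, IntervalIntegrable f volume a b) (c s t : ℝ) :
    ∫ u in s..t, f u =
      c * (t - s) + ((∫ u in 0..t, (f u - c)) - ∫ u in 0..s, (f u - c)) := by
  have hdev : ∀ a b, IntervalIntegrable (fun u => f u - c) volume a b :=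
    fun a b => (hf a b).sub intervalIntegrable_const
  rw [integral_interval_sub_left (hdev 0 t) (hdev 0 s), integral_sub (hf s t)
    intervalIntegrable_const, intervalIntegral.integral_const, smul_eq_mul]
  ring

/-- For 1-periodic α, a bound ‖w(t)‖ ≤ exp(-∫_s^t α)‖w(s)‖ implies
‖w(t)‖ ≤ e^{2M} e^{-ᾱ(t-s)} ‖w(s)‖ where ᾱ is the mean of α over one period and
M = sup_{0≤τ≤1} |∫_0^τ (α - ᾱ)|; if ᾱ > 0 then ‖w(t)‖ → 0 exponentially. -/
theorem periodic_rate_depends_on_mean {E : Type*} [NormedAddCommGroup E]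
    (α : ℝ → ℝ) (hαc : Continuous α) (hper : Function.Periodic α 1)
    (w : ℝ → E)
    (hw : ∀ s t : ℝ, s ≤ t → ‖w t‖ ≤ Real.exp (-∫ u in s..t, α u) * ‖w s‖)
    (abar : ℝ) (habar : abar = ∫ u in (0 : ℝ)..1, α u)
    (M : ℝ)
    (hM : M = ⨆ τ : Set.Icc (0 : ℝ) 1, |∫ u in (0 : ℝ)..(τ : ℝ), (α u - abar)|) :
    (∀ s t : ℝ, 0 ≤ s → s ≤ t →
      ‖w t‖ ≤ Real.exp (2 * M) * Real.exp (-abar * (t - s)) * ‖w s‖) ∧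
    (0 < abar → Tendsto (fun t => ‖w t‖) atTop (nhds 0)) := by
  set F : ℝ → ℝ := fun τ => ∫ u in (0 : ℝ)..τ, (α u - abar)
  have hαint : ∀ a b, IntervalIntegrable α volume a b := hαc.intervalIntegrable
  have hdev_cont : Continuous fun u => α u - abar := hαc.sub continuous_const
  have hdev_periodic : Function.Periodic (fun u => α u - abar) 1 :=
    fun u => congrArg (· - abar) (hper u)
  have hF_periodic : Function.Periodic F 1 :=
    hdev_periodic.periodic_intervalIntegral_of_integral_eq_zero hdev_cont.intervalIntegrable
      (by rw [integral_sub (hαint 0 1) intervalIntegrable_const, ← habar]; simp)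
  have hF_le : ∀ τ, |F τ| ≤ M := fun τ => hM ▸ (hF_periodic.comp abs).le_iSup_Icc one_pos
    (continuous_primitive hdev_cont.intervalIntegrable 0).abs τ
  have hbound : ∀ s t : ℝ, s ≤ t →
      ‖w t‖ ≤ Real.exp (2 * M) * Real.exp (-abar * (t - s)) * ‖w s‖ := fun s t hst =>
    calc ‖w t‖ ≤ Real.exp (-∫ u in s..t, α u) * ‖w s‖ := hw s t hst
      _ ≤ Real.exp (2 * M + -abar * (t - s)) * ‖w s‖ := by
        gcongr
        rw [intervalIntegral_eq_mul_add_sub_primitive hαint abar]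
        linarith [abs_le.1 (hF_le s), abs_le.1 (hF_le t)]
      _ = Real.exp (2 * M) * Real.exp (-abar * (t - s)) * ‖w s‖ := by rw [Real.exp_add]
  refine ⟨fun s t _ => hbound s t, fun habar_pos => ?_⟩
  have hdecay : Tendsto (fun t => Real.exp (2 * M) * Real.exp (-abar * t) * ‖w 0‖)
      atTop (nhds 0) := by
    simpa using ((tendsto_rpow_mul_exp_neg_mul_atTop_nhds_zero 0 abar habar_pos).const_mul
      (Real.exp (2 * M))).mul_const ‖w 0‖
  refine squeeze_zero' (Eventually.of_forall fun t => norm_nonneg _) ?_ hdecay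
  filter_upwards [eventually_ge_atTop 0] with t ht
  simpa only [sub_zero] using hbound 0 t ht
end
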